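/- Let D be a set of edges of the q-T-fractal △_q. If D is not a σ-τ edge cut (i.e., σ and τ are still connected in △_q − D), then dist_{△_q − D}(σ, τ) ≤ |D| + 1. -/

import Mathlib

/-- Auxiliary adjacency: `b = a + 2^(q-i)` for some `i ≤ q` with `2^(q-i) ∣ a`.
These are exactly the (directed versions of the) edges of the `q`-T-fractal,
where the boundary `B_i` consists of the edges at scale `2^(q-i)`. -/
def fracAdjAux (q a b : ℕ) : Prop :=
  ∃ i ≤ q, 2 ^ (q - i) ∣ a ∧ b = a + 2 ^ (q - i)

/-- The `q`-T-fractal, realized on the vertex set `{0, 1, …, 2^q}` (the vertices of the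
outermost boundary path): the left copy of `△_{q-1}` lives on `{0,…,2^{q-1}}`, the right
copy on `{2^{q-1},…,2^q}`, and `{0, 2^q}` is the extra edge; `σ = 0` and `τ = 2^q`. -/
def TFractal (q : ℕ) : SimpleGraph (Fin (2 ^ q + 1)) where
  Adj a b := fracAdjAux q a.val b.val ∨ fracAdjAux q b.val a.val
  symm := ⟨fun _ _ h => h.symm⟩
  loopless := by
    refine ⟨?_⟩
    intro a h
    rcases h with ⟨i, _, _, h⟩ | ⟨i, _, _, h⟩ <;>
      · have := Nat.two_pow_pos (q - i)
        omega

/-- The special vertex `σ` of the `q`-T-fractal. -/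
def sigV (q : ℕ) : Fin (2 ^ q + 1) := ⟨0, Nat.succ_pos _⟩

/-- The special vertex `τ` of the `q`-T-fractal. -/
def tauV (q : ℕ) : Fin (2 ^ q + 1) := ⟨2 ^ q, Nat.lt_succ_self _⟩

/-- The boundary `B_i` of the `q`-T-fractal: the edges created in round `i`,
i.e. the edges `{a, a + 2^(q-i)}` with `2^(q-i) ∣ a`. -/
def boundaryB (q i : ℕ) : Set (Sym2 (Fin (2 ^ q + 1))) :=
  { e | ∃ a b : Fin (2 ^ q + 1),
      e = s(a, b) ∧ 2 ^ (q - i) ∣ a.val ∧ b.val = a.val + 2 ^ (q - i) }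

/-- `C` is a `σ`-`τ` edge cut in the `q`-T-fractal. -/
def IsSTCut (q : ℕ) (C : Set (Sym2 (Fin (2 ^ q + 1)))) : Prop :=
  ¬ ((TFractal q).deleteEdges C).Reachable (sigV q) (tauV q)

/-- `C` is a minimum `σ`-`τ` edge cut in the `q`-T-fractal. -/
def MinSTCut (q : ℕ) (C : Set (Sym2 (Fin (2 ^ q + 1)))) : Prop :=
  C ⊆ (TFractal q).edgeSet ∧ IsSTCut q C ∧
    ∀ C' ⊆ (TFractal q).edgeSet, IsSTCut q C' → C.ncard ≤ C'.ncard

/-!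
On `{0, …, 2^q}` the copies of `△_j` inside `△_q` are the dyadic blocks `[a, a + 2^j]` with
`2^j ∣ a`, and every edge inside such a block other than its top edge `{a, a + 2^j}` lies in one
of the two halves. Hence a walk from `a` to `a + 2^j` inside the block that avoids a deleted top
edge passes through the midpoint, with its part up to the first visit and its part after the last
visit staying in the left and right half respectively. Induction on `j` bounds the distance from
`a` to `a + 2^j` by one more than the number of deleted edges in the block: either the top edge
survives, or it is deleted and counted together with the disjoint deleted edges of the halves.
-/

open SimpleGraph

namespace SimpleGraph.Walk

variable {V : Type*} {G : SimpleGraph V}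

theorem adj_of_forall_mem_support_eq_or_eq {u v : V} (huv : u ≠ v) (w : G.Walk u v)
    (hw : ∀ z ∈ w.support, z = u ∨ z = v) : G.Adj u v := by
  cases w with
  | nil => exact absurd rfl huv
  | @cons _ x _ h p =>
    obtain rfl | rfl := hw x (by simp)
    · exact absurd h (G.loopless.irrefl _)
    · exact h

/-- If, inside `T`, the only way out of `S` is through `m`, then a walk inside `T` that starts
in `S` and ends outside `S` has an initial segment ending at `m` and lying in `S`. -/
theorem exists_walk_to_of_exit {S T : Set V} {m : V}
    (hexit : ∀ x y, G.Adj x y → x ∈ S → x ≠ m → y ∈ T → y ∈ S) :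
    ∀ {u v : V} (w : G.Walk u v), (∀ z ∈ w.support, z ∈ T) → u ∈ S → v ∉ S →
      ∃ w' : G.Walk u m, ∀ z ∈ w'.support, z ∈ S
  | _, _, .nil, _, hu, hv => absurd hu hv
  | u, _, .cons h p, hT, hu, hv => by
    by_cases hum : u = m
    · subst hum
      exact ⟨.nil, by simpa using hu⟩
    · have hx := hexit _ _ h hu hum (hT _ (by simp))
      obtain ⟨w', hw'⟩ := exists_walk_to_of_exit hexit p (fun z hz => hT z (by simp [hz])) hx hv
      exact ⟨.cons h w', by simpa [hu] using hw'⟩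

end SimpleGraph.Walk

theorem Nat.add_two_pow_le_of_dvd {x s a j : ℕ} (hx : 2 ^ s ∣ x) (ha : 2 ^ j ∣ a)
    (hsj : s ≤ j) (hxa : x < a + 2 ^ j) : x + 2 ^ s ≤ a + 2 ^ j := by
  have hdvd : 2 ^ s ∣ a + 2 ^ j - x :=
    Nat.dvd_sub (Nat.dvd_add ((pow_dvd_pow 2 hsj).trans ha) (pow_dvd_pow 2 hsj)) hx
  have := Nat.le_of_dvd (by omega) hdvd
  omega

theorem Nat.add_two_pow_le_mid {x s a j : ℕ} (hx : 2 ^ s ∣ x) (ha : 2 ^ (j + 1) ∣ a)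
    (hax : a ≤ x) (hxm : x < a + 2 ^ j) (hxb : x + 2 ^ s ≤ a + 2 ^ (j + 1))
    (htop : ¬(x = a ∧ x + 2 ^ s = a + 2 ^ (j + 1))) : x + 2 ^ s ≤ a + 2 ^ j := by
  have hsj : s ≤ j := by
    by_contra! hjs
    have := Nat.pow_le_pow_right two_pos hjs
    omega
  exact Nat.add_two_pow_le_of_dvd hx ((pow_dvd_pow 2 j.le_succ).trans ha) hsj hxm

namespace TFractal

variable {q : ℕ}

theorem adj_of_dvd {j : ℕ} {u v : Fin (2 ^ q + 1)} (hu : 2 ^ j ∣ u.val)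
    (hv : v.val = u.val + 2 ^ j) : (TFractal q).Adj u v := by
  have hjq : j ≤ q :=
    (Nat.pow_le_pow_iff_right one_lt_two).mp (by have := v.isLt; omega)
  exact Or.inl ⟨q - j, q.sub_le j, by rwa [Nat.sub_sub_self hjq], by rwa [Nat.sub_sub_self hjq]⟩

theorem lt_of_fracAdjAux {a b : ℕ} (h : fracAdjAux q a b) : a < b := by
  obtain ⟨i, -, -, rfl⟩ := h
  exact Nat.lt_add_of_pos_right (Nat.two_pow_pos _)

variable {a j : ℕ} {x y : Fin (2 ^ q + 1)}

theorem le_mid_of_adj (ha : 2 ^ (j + 1) ∣ a) (hxy : (TFractal q).Adj x y)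
    (hax : a ≤ x.val) (hxm : x.val < a + 2 ^ j) (hyb : y.val ≤ a + 2 ^ (j + 1))
    (htop : ¬(x.val = a ∧ y.val = a + 2 ^ (j + 1))) : y.val ≤ a + 2 ^ j := by
  rcases hxy with hxy | hyx
  · obtain ⟨i, -, hdvd, hy⟩ := hxy
    rw [hy] at hyb htop ⊢
    exact Nat.add_two_pow_le_mid hdvd ha hax hxm hyb htop
  · have := lt_of_fracAdjAux hyx
    omega

theorem mid_le_of_adj (ha : 2 ^ (j + 1) ∣ a) (hxy : (TFractal q).Adj x y)
    (hmx : a + 2 ^ j < x.val) (hxb : x.val ≤ a + 2 ^ (j + 1)) (hay : a ≤ y.val)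
    (htop : ¬(y.val = a ∧ x.val = a + 2 ^ (j + 1))) : a + 2 ^ j ≤ y.val := by
  by_contra! hym
  have := le_mid_of_adj ha hxy.symm hay hym hxb htop
  omega

end TFractal

def blockEdges (q a b : ℕ) : Set (Sym2 (Fin (2 ^ q + 1))) :=
  {e | ∀ z ∈ e, a ≤ z.val ∧ z.val ≤ b}

theorem ncard_inter_blockEdges_add_ncard_add_one_le {q a b c : ℕ}
    {G : SimpleGraph (Fin (2 ^ q + 1))} {D : Set (Sym2 (Fin (2 ^ q + 1)))} (hD : D ⊆ G.edgeSet)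
    {u v : Fin (2 ^ q + 1)} (hu : u.val = a) (hv : v.val = c) (hab : a < b) (hbc : b < c)
    (huvD : s(u, v) ∈ D) :
    (D ∩ blockEdges q a b).ncard + (D ∩ blockEdges q b c).ncard + 1 ≤
      (D ∩ blockEdges q a c).ncard := by
  have hLR : Disjoint (D ∩ blockEdges q a b) (D ∩ blockEdges q b c) := by
    rw [Set.disjoint_left]
    intro e heL heR
    induction e using Sym2.ind with
    | _ x y =>
      have hx := heL.2 x (Sym2.mem_mk_left _ _)
      have hx' := heR.2 x (Sym2.mem_mk_left _ _)
      have hy := heL.2 y (Sym2.mem_mk_right _ _)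
      have hy' := heR.2 y (Sym2.mem_mk_right _ _)
      obtain rfl : x = y := Fin.ext (by omega)
      exact G.loopless.irrefl _ (hD heL.1)
  have hL : s(u, v) ∉ D ∩ blockEdges q a b := fun h => by
    have := h.2 v (Sym2.mem_mk_right _ _); omega
  have hR : s(u, v) ∉ D ∩ blockEdges q b c := fun h => by
    have := h.2 u (Sym2.mem_mk_left _ _); omega
  have hsub : insert s(u, v) (D ∩ blockEdges q a b ∪ D ∩ blockEdges q b c) ⊆
      D ∩ blockEdges q a c := by
    rintro e (rfl | ⟨hD, he⟩ | ⟨hD, he⟩)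
    · refine ⟨huvD, fun z hz => ?_⟩
      rcases Sym2.mem_iff.mp hz with rfl | rfl <;> omega
    · exact ⟨hD, fun z hz => by have := he z hz; omega⟩
    · exact ⟨hD, fun z hz => by have := he z hz; omega⟩
  have := Set.ncard_le_ncard hsub (Set.toFinite _)
  rw [Set.ncard_insert_of_notMem (by rintro (h | h) <;> contradiction) (Set.toFinite _),
    Set.ncard_union_eq hLR (Set.toFinite _) (Set.toFinite _)] at this
  exact this

theorem TFractal.exists_walks_through_mid {q j a : ℕ} {D : Set (Sym2 (Fin (2 ^ q + 1)))}
    {u v m : Fin (2 ^ q + 1)} (ha : 2 ^ (j + 1) ∣ a) (hu : u.val = a)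
    (hv : v.val = a + 2 ^ (j + 1)) (hm : m.val = a + 2 ^ j) (huvD : s(u, v) ∈ D)
    (w : ((TFractal q).deleteEdges D).Walk u v)
    (hw : ∀ z ∈ w.support, a ≤ z.val ∧ z.val ≤ a + 2 ^ (j + 1)) :
    (∃ wL : ((TFractal q).deleteEdges D).Walk u m,
        ∀ z ∈ wL.support, a ≤ z.val ∧ z.val ≤ a + 2 ^ j) ∧
      ∃ wR : ((TFractal q).deleteEdges D).Walk m v,
        ∀ z ∈ wR.support, a + 2 ^ j ≤ z.val ∧ z.val ≤ a + 2 ^ (j + 1) := by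
  have hnotTop : ∀ x y, ((TFractal q).deleteEdges D).Adj x y →
      ¬(x.val = a ∧ y.val = a + 2 ^ (j + 1)) := by
    rintro x y hxy ⟨hx, hy⟩
    obtain rfl : x = u := Fin.ext (by omega)
    obtain rfl : y = v := Fin.ext (by omega)
    exact (deleteEdges_adj.1 hxy).2 huvD
  have hpos := Nat.two_pow_pos j
  have h2 : 2 ^ (j + 1) = 2 ^ j + 2 ^ j := by ring
  obtain ⟨wL, hwL⟩ := w.exists_walk_to_of_exit (m := m)
    (S := {z | a ≤ z.val ∧ z.val ≤ a + 2 ^ j})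
    (fun x y hxy hx hxm hy => ⟨hy.1, le_mid_of_adj ha (deleteEdges_adj.1 hxy).1 hx.1
      (lt_of_le_of_ne hx.2 fun h => hxm (Fin.ext (by omega))) hy.2 (hnotTop x y hxy)⟩)
    hw ⟨hu.ge, by omega⟩ fun h => by have := h.2; omega
  obtain ⟨wR, hwR⟩ := w.reverse.exists_walk_to_of_exit (m := m)
    (S := {z | a + 2 ^ j ≤ z.val ∧ z.val ≤ a + 2 ^ (j + 1)})
    (T := {z : Fin (2 ^ q + 1) | a ≤ z.val ∧ z.val ≤ a + 2 ^ (j + 1)})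
    (fun x y hxy hx hxm hy => ⟨mid_le_of_adj ha (deleteEdges_adj.1 hxy).1
      (lt_of_le_of_ne' hx.1 fun h => hxm (Fin.ext (by omega))) hx.2 hy.1
      (hnotTop y x hxy.symm), hy.2⟩)
    (fun z hz => hw z (by simpa using hz)) ⟨by omega, hv.le⟩ fun h => by have := h.1; omega
  exact ⟨⟨wL, hwL⟩, wR.reverse, fun z hz => hwR z (by simpa using hz)⟩

theorem TFractal.dist_deleteEdges_le_ncard_blockEdges {q : ℕ} {D : Set (Sym2 (Fin (2 ^ q + 1)))}
    (hD : D ⊆ (TFractal q).edgeSet) (j : ℕ) {a : ℕ} {u v : Fin (2 ^ q + 1)} (ha : 2 ^ j ∣ a)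
    (hu : u.val = a) (hv : v.val = a + 2 ^ j) (w : ((TFractal q).deleteEdges D).Walk u v)
    (hw : ∀ z ∈ w.support, a ≤ z.val ∧ z.val ≤ a + 2 ^ j) :
    ((TFractal q).deleteEdges D).dist u v ≤ (D ∩ blockEdges q a (a + 2 ^ j)).ncard + 1 := by
  induction j generalizing a u v with
  | zero =>
    have hadj : ((TFractal q).deleteEdges D).Adj u v := w.adj_of_forall_mem_support_eq_or_eq
      (fun h => by subst h; simp only [pow_zero] at hv; omega)
      (fun z hz => by
        have := hw z hz
        simp only [pow_zero] at this hv
        by_cases hza : z.val = a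
        · exact Or.inl (Fin.ext (by omega))
        · exact Or.inr (Fin.ext (by omega)))
    rw [dist_eq_one_iff_adj.2 hadj]
    omega
  | succ j ih =>
    by_cases huvD : s(u, v) ∈ D
    swap
    · have hadj : ((TFractal q).deleteEdges D).Adj u v :=
        deleteEdges_adj.2 ⟨adj_of_dvd (hu ▸ ha) (by rw [hv, hu]), huvD⟩
      rw [dist_eq_one_iff_adj.2 hadj]
      omega
    have h2 : 2 ^ (j + 1) = 2 ^ j + 2 ^ j := by ring
    let m : Fin (2 ^ q + 1) := ⟨a + 2 ^ j, by have := v.isLt; omega⟩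
    obtain ⟨⟨wL, hwL⟩, wR, hwR⟩ := exists_walks_through_mid ha hu hv rfl huvD w hw (m := m)
    have hdvd : 2 ^ j ∣ a := (pow_dvd_pow 2 j.le_succ).trans ha
    have hL := ih hdvd hu rfl wL hwL
    have hR := ih (Nat.dvd_add hdvd dvd_rfl) rfl (by omega) wR (by rwa [add_assoc, ← h2])
    rw [add_assoc, ← h2] at hR
    have hcount := ncard_inter_blockEdges_add_ncard_add_one_le hD hu hv
      (Nat.lt_add_of_pos_right (Nat.two_pow_pos j)) (by omega) huvD
    have htri := wL.reachable.dist_triangle_left v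
    omega

theorem tfractal_not_cut_short_path_general (q : ℕ) (D : Set (Sym2 (Fin (2 ^ q + 1))))
    (hreach : ((TFractal q).deleteEdges D).Reachable (sigV q) (tauV q)) :
    ((TFractal q).deleteEdges D).dist (sigV q) (tauV q) ≤ D.ncard + 1 := by
  rw [deleteEdges_eq_inter_edgeSet] at hreach ⊢
  obtain ⟨w⟩ := hreach
  calc _ ≤ (D ∩ (TFractal q).edgeSet ∩ blockEdges q 0 (0 + 2 ^ q)).ncard + 1 :=
        TFractal.dist_deleteEdges_le_ncard_blockEdges Set.inter_subset_right q (dvd_zero _) rfl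
          (zero_add _).symm w fun z _ => ⟨z.val.zero_le, by have := z.isLt; omega⟩
    _ ≤ D.ncard + 1 := by
      gcongr
      · exact Set.toFinite D
      · exact Set.inter_subset_left.trans Set.inter_subset_left

/-- if `D` is a set of edges of `△_q` that is not a `σ`-`τ` edge cut,
then `σ` and `τ` are at distance at most `|D| + 1` in `△_q − D`. -/
theorem tfractal_not_cut_short_path (q : ℕ) (D : Set (Sym2 (Fin (2 ^ q + 1))))
    (hD : D ⊆ (TFractal q).edgeSet)
    (hreach : ((TFractal q).deleteEdges D).Reachable (sigV q) (tauV q)) :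
    ((TFractal q).deleteEdges D).dist (sigV q) (tauV q) ≤ D.ncard + 1 :=
  tfractal_not_cut_short_path_general q D hreach
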